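/- arXiv:math/0512482 — 3 statements merged into one kernel-verified Lean document; each statement's English description precedes it below -/
import Mathlib

section
/- Let f be holomorphic on the open unit disk Δ of the form f(z) = a - conj(a)·z² + z·p(z), where a ∈ ℂ and p is holomorphic with Re p(z) ≥ 0 on Δ. Suppose τ ∈ ∂Δ satisfies f(τ) = 0 (f extends continuously at τ with value 0) and f has a finite angular derivative f'(τ) at τ. Then f'(τ) is real and f'(τ) ≤ -2·Re(conj(a)·τ). -/
open Complex Metric Filter Set Asymptotics Topology

/-- Stolz angle (non-tangential approach region) at a boundary point `τ`. -/
def StolzAt (τ : ℂ) (M : ℝ) : Set ℂ :=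
  {z : ℂ | ‖τ - z‖ < M * (1 - ‖z‖)}

/-- `f` has angular (non-tangential) limit `L` at `τ`: the limit through every
Stolz angle at `τ` is `L`. -/
def AngularTendsto (f : ℂ → ℂ) (τ L : ℂ) : Prop :=
  ∀ M : ℝ, 1 < M → Tendsto f (𝓝[StolzAt τ M] τ) (𝓝 L)

/-!
Writing `b = conj a * τ`, the identity `|τ| = 1` gives
`f z / (z - τ) + (conj a * z + conj b) = z * (p z - (b - conj b)) / (z - τ)`,
so `k + 2 Re b` is the angular limit of `z * P z / (z - τ)` for `P = p - (b - conj b)`, which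
still has nonnegative real part. Approaching `τ` along `τ * (1 - t ζ)` with `Re ζ > 0` turns this
limit `m` into `P (τ * (1 - t ζ)) / t → -m ζ`, whence `Re (m ζ) ≤ 0` for all such `ζ`, which
forces `m` to be real and nonpositive.
-/

open ComplexConjugate

lemma StolzAt_subset_ball {τ : ℂ} {M : ℝ} (hM : 0 < M) : StolzAt τ M ⊆ ball 0 1 := by
  intro z hz
  have : 0 < M * (1 - ‖z‖) := (norm_nonneg _).trans_lt hz
  rw [mem_ball_zero_iff]
  linarith [pos_of_mul_pos_right this hM.le]

section AngularTendsto

variable {f g : ℂ → ℂ} {τ L L' : ℂ}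

lemma AngularTendsto.congr_ball (h : AngularTendsto f τ L)
    (hfg : ∀ z ∈ ball (0 : ℂ) 1, f z = g z) : AngularTendsto g τ L := fun M hM =>
  (h M hM).congr' <| eventually_nhdsWithin_of_forall fun z hz =>
    hfg z (StolzAt_subset_ball (by linarith) hz)

lemma AngularTendsto.add (hf : AngularTendsto f τ L) (hg : AngularTendsto g τ L') :
    AngularTendsto (fun z => f z + g z) τ (L + L') := fun M hM =>
  (hf M hM).add (hg M hM)

lemma ContinuousAt.angularTendsto (hg : ContinuousAt g τ) : AngularTendsto g τ (g τ) :=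
  fun _ _ => hg.tendsto.mono_left nhdsWithin_le_nhds

end AngularTendsto

section StolzPath

variable {τ ζ : ℂ}

lemma norm_mul_one_sub_sq (hτ : ‖τ‖ = 1) (t : ℝ) :
    ‖τ * (1 - t * ζ)‖ ^ 2 = 1 - 2 * t * ζ.re + t ^ 2 * ‖ζ‖ ^ 2 := by
  rw [norm_mul, hτ, one_mul, Complex.sq_norm, Complex.sq_norm, normSq_apply, normSq_apply]
  simp only [sub_re, sub_im, one_re, one_im, mul_re, mul_im, ofReal_re, ofReal_im]
  ring

lemma one_lt_two_mul_norm_div_re (hζ : 0 < ζ.re) : 1 < 2 * ‖ζ‖ / ζ.re := by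
  rw [lt_div_iff₀ hζ]
  linarith [re_le_norm ζ]

lemma mul_one_sub_mem_StolzAt (hτ : ‖τ‖ = 1) (hζ : 0 < ζ.re) {t : ℝ} (ht : 0 < t)
    (htζ : t * ‖ζ‖ ^ 2 < ζ.re) : τ * (1 - t * ζ) ∈ StolzAt τ (2 * ‖ζ‖ / ζ.re) := by
  set z := τ * (1 - t * ζ)
  have hdist : ‖τ - z‖ = t * ‖ζ‖ := by
    rw [show τ - z = τ * (t * ζ) by ring, norm_mul, norm_mul, hτ, norm_real, Real.norm_of_nonneg ht.le,
      one_mul]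
  have hz : ‖z‖ ^ 2 < 1 - t * ζ.re := by
    rw [norm_mul_one_sub_sq hτ]
    nlinarith
  have hgap : t * ζ.re < 2 * (1 - ‖z‖) := by nlinarith [norm_nonneg z, mul_pos ht hζ]
  show ‖τ - z‖ < 2 * ‖ζ‖ / ζ.re * (1 - ‖z‖)
  rw [hdist, div_mul_eq_mul_div, lt_div_iff₀ hζ]
  nlinarith [norm_pos_iff.2 (ne_zero_of_re_pos hζ)]

lemma tendsto_mul_one_sub_nhdsWithin_StolzAt (hτ : ‖τ‖ = 1) (hζ : 0 < ζ.re) :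
    Tendsto (fun t : ℝ => τ * (1 - t * ζ)) (𝓝[>] 0) (𝓝[StolzAt τ (2 * ‖ζ‖ / ζ.re)] τ) := by
  refine tendsto_nhdsWithin_iff.2 ⟨?_, ?_⟩
  · have hc : Continuous fun t : ℝ => τ * (1 - t * ζ) := by fun_prop
    exact (hc.tendsto' 0 τ (by simp)).mono_left nhdsWithin_le_nhds
  · have hζ2 : 0 < ‖ζ‖ ^ 2 := by positivity [norm_pos_iff.2 (ne_zero_of_re_pos hζ)]
    filter_upwards [Ioo_mem_nhdsGT (div_pos hζ hζ2)] with t ht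
    exact mul_one_sub_mem_StolzAt hτ hζ ht.1 ((lt_div_iff₀ hζ2).1 ht.2)

lemma AngularTendsto.tendsto_mul_one_sub {g : ℂ → ℂ} {L : ℂ} (h : AngularTendsto g τ L)
    (hτ : ‖τ‖ = 1) (hζ : 0 < ζ.re) :
    Tendsto (fun t : ℝ => g (τ * (1 - t * ζ))) (𝓝[>] 0) (𝓝 L) :=
  (h _ (one_lt_two_mul_norm_div_re hζ)).comp (tendsto_mul_one_sub_nhdsWithin_StolzAt hτ hζ)

end StolzPath

lemma im_eq_zero_and_re_nonpos_of_forall_re_mul_nonpos {w : ℂ}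
    (h : ∀ ζ : ℂ, 0 < ζ.re → (w * ζ).re ≤ 0) : w.im = 0 ∧ w.re ≤ 0 := by
  have hre : w.re ≤ 0 := by simpa using h 1 one_pos
  refine ⟨?_, hre⟩
  by_contra him
  -- `ζ = w.im * (w.im - (1 - w.re) * I)` lies in the right half-plane and `Re (w ζ) = w.im ^ 2`
  have hpos : 0 < w.im ^ 2 := by positivity
  have hw := h (((w.im ^ 2 : ℝ) : ℂ) - ((w.im * (1 - w.re) : ℝ) : ℂ) * I)
    (by simp only [sub_re, mul_re, ofReal_re, ofReal_im, I_re, I_im]; linarith)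
  simp only [mul_re, mul_im, sub_re, sub_im, ofReal_re, ofReal_im, I_re, I_im] at hw
  nlinarith

lemma re_mul_nonpos_of_angularTendsto {P : ℂ → ℂ} {τ m ζ : ℂ} (hτ : ‖τ‖ = 1)
    (hP : ∀ z ∈ ball (0 : ℂ) 1, 0 ≤ (P z).re)
    (hm : AngularTendsto (fun z => z * P z / (z - τ)) τ m) (hζ : 0 < ζ.re) :
    (m * ζ).re ≤ 0 := by
  set c : ℝ → ℂ := fun t => τ * (1 - t * ζ)
  have hτ0 : τ ≠ 0 := norm_ne_zero_iff.1 (by simp [hτ])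
  have hζ0 : ζ ≠ 0 := ne_zero_of_re_pos hζ
  have hc : Tendsto c (𝓝[>] 0) (𝓝[StolzAt τ (2 * ‖ζ‖ / ζ.re)] τ) :=
    tendsto_mul_one_sub_nhdsWithin_StolzAt hτ hζ
  have hball : ∀ᶠ t in 𝓝[>] 0, c t ∈ ball (0 : ℂ) 1 :=
    (hc.eventually eventually_mem_nhdsWithin).mono fun t ht =>
      StolzAt_subset_ball (by linarith [one_lt_two_mul_norm_div_re hζ]) ht
  have hc0 : ∀ᶠ t in 𝓝[>] 0, c t ≠ 0 := (hc.mono_right nhdsWithin_le_nhds).eventually_ne hτ0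
  have hsub : ∀ t : ℝ, c t - τ = -(t * τ * ζ) := fun t => by ring
  have hratio : Tendsto (fun t : ℝ => (c t - τ) / (t * c t)) (𝓝[>] 0) (𝓝 (-ζ)) := by
    have hlim : Tendsto (fun t => -(τ * ζ) / c t) (𝓝[>] 0) (𝓝 (-(τ * ζ) / τ)) :=
      tendsto_const_nhds.div (hc.mono_right nhdsWithin_le_nhds) hτ0
    rw [show -(τ * ζ) / τ = -ζ by field_simp] at hlim
    refine hlim.congr' ?_
    filter_upwards [self_mem_nhdsWithin, hc0] with t (ht : 0 < t) hct
    rw [hsub]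
    field_simp [ofReal_ne_zero.2 ht.ne']
  have hquot : Tendsto (fun t : ℝ => P (c t) / t) (𝓝[>] 0) (𝓝 (-(m * ζ))) := by
    have hlim := (hm.tendsto_mul_one_sub hτ hζ).mul hratio
    rw [mul_neg] at hlim
    refine hlim.congr' ?_
    filter_upwards [self_mem_nhdsWithin, hc0] with t (ht : 0 < t) hct
    have hct' : c t - τ ≠ 0 := by
      rw [hsub]; exact neg_ne_zero.2 (mul_ne_zero (mul_ne_zero (ofReal_ne_zero.2 ht.ne') hτ0) hζ0)
    show c t * P (c t) / (c t - τ) * ((c t - τ) / (t * c t)) = P (c t) / t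
    field_simp
  have hnonneg : 0 ≤ (-(m * ζ)).re := by
    refine ge_of_tendsto ((continuous_re.tendsto _).comp hquot) ?_
    filter_upwards [hball, self_mem_nhdsWithin] with t hz (ht : 0 < t)
    simpa only [Function.comp_apply, div_ofReal_re] using div_nonneg (hP _ hz) ht.le
  simpa using hnonneg

lemma im_eq_zero_and_re_nonpos_of_angularTendsto {P : ℂ → ℂ} {τ m : ℂ} (hτ : ‖τ‖ = 1)
    (hP : ∀ z ∈ ball (0 : ℂ) 1, 0 ≤ (P z).re)
    (hm : AngularTendsto (fun z => z * P z / (z - τ)) τ m) : m.im = 0 ∧ m.re ≤ 0 :=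
  im_eq_zero_and_re_nonpos_of_forall_re_mul_nonpos fun _ hζ =>
    re_mul_nonpos_of_angularTendsto hτ hP hm hζ

lemma generator_div_sub_add_eq {a τ z w : ℂ} (hτ : τ * conj τ = 1) (hz : z ≠ τ) :
    (a - conj a * z ^ 2 + z * w) / (z - τ) + (conj a * z + conj (conj a * τ)) =
      z * (w - (conj a * τ - conj (conj a * τ))) / (z - τ) := by
  have hzτ : z - τ ≠ 0 := sub_ne_zero.2 hz
  field_simp
  simp only [map_mul, conj_conj]
  linear_combination -a * hτ

theorem generator_boundary_null_point_derivative_general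
    (f p : ℂ → ℂ) (a τ k : ℂ) (hτ : ‖τ‖ = 1)
    (hre : ∀ z ∈ ball (0:ℂ) 1, 0 ≤ (p z).re)
    (hf : ∀ z ∈ ball (0:ℂ) 1, f z = a - (starRingEnd ℂ) a * z ^ 2 + z * p z)
    (hderiv : AngularTendsto (fun z => f z / (z - τ)) τ k) :
    k.im = 0 ∧ k.re ≤ -2 * ((starRingEnd ℂ) a * τ).re := by
  set b := conj a * τ
  have hττ : τ * conj τ = 1 := by
    rw [mul_conj, normSq_eq_norm_sq, hτ]; norm_num
  have hshift : AngularTendsto (fun z => z * (p z - (b - conj b)) / (z - τ)) τ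
      (k + (b + conj b)) := by
    refine (hderiv.add (g := fun z => conj a * z + conj b)
      (by fun_prop : ContinuousAt _ τ).angularTendsto).congr_ball fun z hz => ?_
    rw [hf z hz]
    exact generator_div_sub_add_eq hττ fun h => by simp [h, hτ] at hz
  obtain ⟨him, hnonpos⟩ := im_eq_zero_and_re_nonpos_of_angularTendsto hτ
    (fun z hz => by simpa [sub_conj] using hre z hz) hshift
  rw [add_conj] at him hnonpos
  simp only [add_im, add_re, ofReal_im, ofReal_re, add_zero] at him hnonpos
  exact ⟨him, by linarith⟩

theorem generator_boundary_null_point_derivative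
    (f p : ℂ → ℂ) (a τ k : ℂ) (hτ : ‖τ‖ = 1)
    (hp : DifferentiableOn ℂ p (ball (0:ℂ) 1))
    (hre : ∀ z ∈ ball (0:ℂ) 1, 0 ≤ (p z).re)
    (hf : ∀ z ∈ ball (0:ℂ) 1, f z = a - (starRingEnd ℂ) a * z ^ 2 + z * p z)
    (hderiv : AngularTendsto (fun z => f z / (z - τ)) τ k) :
    k.im = 0 ∧ k.re ≤ -2 * ((starRingEnd ℂ) a * τ).re :=
  generator_boundary_null_point_derivative_general f p a τ k hτ hre hf hderiv
end

section
/- Let f(z) = a - conj(a)·z² + z·p(z) on the unit disk Δ with Re p ≥ 0, and suppose f(τ) = 0 at τ ∈ ∂Δ with finite angular derivative f'(τ). If f'(τ) = -2·Re(conj(a)·τ), then p is constant, equal to 2i·Im(conj(a)·τ), so that f(z) = a + 2i·Im(conj(a)·τ)·z - conj(a)·z². -/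
open Complex Metric Filter Set Asymptotics Topology

/-! With `c = 2i Im(conj a · τ)` and `q = p - c`, the hypothesis on the angular derivative of `f`
becomes `q(rτ)/(1 - r) → 0` along the radius to `τ`, while `Re q ≥ 0`. By the open mapping
theorem `q` is either constant, hence `0`, or maps the disk into the open right half-plane. In the
latter case Harnack's inequality `Re q(z) ≥ Re q(0) (1 - |z|)/(1 + |z|)`, which is the Schwarz lemma
for the Cayley transform of `q`, contradicts the radial decay. -/

open ComplexConjugate

lemma norm_sub_lt_norm_add_conj {w w₀ : ℂ} (hw : 0 < w.re) (hw₀ : 0 < w₀.re) :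
    ‖w - w₀‖ < ‖w + conj w₀‖ := by
  have h : ‖w - w₀‖ ^ 2 < ‖w + conj w₀‖ ^ 2 := by
    simp only [Complex.sq_norm, normSq_apply, sub_re, sub_im, add_re, add_im, conj_re, conj_im]
    nlinarith [mul_pos hw hw₀]
  exact lt_of_pow_lt_pow_left₀ 2 (norm_nonneg _) h

lemma re_mul_one_sub_le_of_norm_sub_le {w w₀ : ℂ} {r : ℝ} (hw : 0 ≤ w.re) (hw₀ : 0 ≤ w₀.re)
    (hr₀ : 0 ≤ r) (hr₁ : r ≤ 1) (h : ‖w - w₀‖ ≤ r * ‖w + conj w₀‖) :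
    w₀.re * (1 - r) ≤ w.re * (1 + r) := by
  have hsq : ‖w - w₀‖ ^ 2 ≤ r ^ 2 * ‖w + conj w₀‖ ^ 2 := by
    rw [← mul_pow]; exact pow_le_pow_left₀ (norm_nonneg _) h 2
  simp only [Complex.sq_norm, normSq_apply, sub_re, sub_im, add_re, add_im, conj_re, conj_im] at hsq
  have hre : (w.re - w₀.re) ^ 2 ≤ (r * (w.re + w₀.re)) ^ 2 := by
    nlinarith [mul_nonneg (sub_nonneg.mpr (pow_le_one₀ hr₀ hr₁ : r ^ 2 ≤ 1))
      (sq_nonneg (w.im - w₀.im))]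
  linarith [(abs_le_of_sq_le_sq' hre (mul_nonneg hr₀ (add_nonneg hw hw₀))).1]

theorem harnack_re_lower_bound {q : ℂ → ℂ} (hq : DifferentiableOn ℂ q (ball 0 1))
    (hre : ∀ z ∈ ball (0 : ℂ) 1, 0 < (q z).re) {z : ℂ} (hz : z ∈ ball (0 : ℂ) 1) :
    (q 0).re * (1 - ‖z‖) ≤ (q z).re * (1 + ‖z‖) := by
  have h₀ : (0 : ℂ) ∈ ball (0 : ℂ) 1 := mem_ball_self one_pos
  have hden : ∀ z ∈ ball (0 : ℂ) 1, q z + conj (q 0) ≠ 0 := fun z hz h => by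
    have := congrArg re h
    simp only [add_re, conj_re, zero_re] at this
    linarith [hre z hz, hre 0 h₀]
  -- the Cayley transform centred at `q 0` maps the disk into itself and `0` to `0`
  have hschwarz : ‖(q z - q 0) / (q z + conj (q 0))‖ ≤ ‖z‖ := by
    refine Complex.norm_le_norm_of_mapsTo_ball ((hq.sub_const _).div (hq.add_const _) hden)
      (fun z hz => ?_) (by simp) (mem_ball_zero_iff.mp hz)
    rw [mem_closedBall_zero_iff, Pi.div_apply, norm_div, div_le_one (norm_pos_iff.mpr (hden z hz))]
    exact (norm_sub_lt_norm_add_conj (hre z hz) (hre 0 h₀)).le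
  rw [norm_div, div_le_iff₀ (norm_pos_iff.mpr (hden z hz))] at hschwarz
  exact re_mul_one_sub_le_of_norm_sub_le (hre z hz).le (hre 0 h₀).le (norm_nonneg z)
    (mem_ball_zero_iff.mp hz).le hschwarz

lemma norm_ofReal_mul_of_norm_eq_one {τ : ℂ} (hτ : ‖τ‖ = 1) (r : ℝ) : ‖(r : ℂ) * τ‖ = |r| := by
  rw [norm_mul, norm_real, hτ, mul_one, Real.norm_eq_abs]

lemma ofReal_mul_mem_ball {τ : ℂ} (hτ : ‖τ‖ = 1) {r : ℝ} (hr : r ∈ Ioo 0 1) :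
    (r : ℂ) * τ ∈ ball (0 : ℂ) 1 := by
  rw [mem_ball_zero_iff, norm_ofReal_mul_of_norm_eq_one hτ, abs_of_pos hr.1]
  exact hr.2

lemma tendsto_ofReal_nhdsLT_one : Tendsto (fun r : ℝ => (r : ℂ)) (𝓝[<] 1) (𝓝 1) :=
  (continuous_ofReal.tendsto' 1 1 ofReal_one).mono_left nhdsWithin_le_nhds

lemma tendsto_ofReal_mul_nhdsWithin_stolzAt {τ : ℂ} (hτ : ‖τ‖ = 1) {M : ℝ} (hM : 1 < M) :
    Tendsto (fun r : ℝ => (r : ℂ) * τ) (𝓝[<] 1) (𝓝[StolzAt τ M] τ) := by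
  refine tendsto_nhdsWithin_iff.mpr ⟨by simpa using tendsto_ofReal_nhdsLT_one.mul_const τ, ?_⟩
  filter_upwards [Ioo_mem_nhdsLT one_pos] with r hr
  have hτr : τ - (r : ℂ) * τ = ((1 - r : ℝ) : ℂ) * τ := by push_cast; ring
  change ‖τ - (r : ℂ) * τ‖ < M * (1 - ‖(r : ℂ) * τ‖)
  rw [hτr, norm_ofReal_mul_of_norm_eq_one hτ, norm_ofReal_mul_of_norm_eq_one hτ,
    abs_of_pos (sub_pos.mpr hr.2), abs_of_pos hr.1]
  nlinarith [hr.2]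

lemma AngularTendsto.tendsto_radial {g : ℂ → ℂ} {τ L : ℂ} (h : AngularTendsto g τ L)
    (hτ : ‖τ‖ = 1) : Tendsto (fun r : ℝ => g (r * τ)) (𝓝[<] 1) (𝓝 L) :=
  (h 2 one_lt_two).comp (tendsto_ofReal_mul_nhdsWithin_stolzAt hτ one_lt_two)

theorem eq_zero_of_re_nonneg_of_tendsto_div_one_sub {q : ℂ → ℂ} {τ : ℂ} (hτ : ‖τ‖ = 1)
    (hq : DifferentiableOn ℂ q (ball 0 1)) (hre : ∀ z ∈ ball (0 : ℂ) 1, 0 ≤ (q z).re)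
    (hlim : Tendsto (fun r : ℝ => q (r * τ) / (1 - r)) (𝓝[<] 1) (𝓝 0)) :
    ∀ z ∈ ball (0 : ℂ) 1, q z = 0 := by
  rcases (hq.analyticOnNhd isOpen_ball).is_constant_or_isOpen (convex_ball 0 1).isPreconnected
    with ⟨w, hw⟩ | hopen
  · have hconst : Tendsto (fun _ : ℝ => w) (𝓝[<] 1) (𝓝 0) := by
      have h := hlim.mul ((tendsto_const_nhds (x := (1 : ℂ))).sub tendsto_ofReal_nhdsLT_one)
      rw [sub_self, mul_zero] at h
      refine h.congr' ?_
      filter_upwards [Ioo_mem_nhdsLT one_pos] with r hr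
      have : (1 : ℂ) - r ≠ 0 := by exact_mod_cast (sub_pos.mpr hr.2).ne'
      rw [hw _ (ofReal_mul_mem_ball hτ hr), div_mul_cancel₀ _ this]
    intro z hz
    rw [hw z hz, tendsto_nhds_unique tendsto_const_nhds hconst]
  · -- an open subset of the closed right half-plane lies in the open one
    have hpos : ∀ z ∈ ball (0 : ℂ) 1, 0 < (q z).re := fun z hz => by
      have h := (hopen _ subset_rfl isOpen_ball).subset_interior_iff.mpr
        (image_subset_iff.mpr hre : q '' ball 0 1 ⊆ {w : ℂ | 0 ≤ w.re})
      simpa using h (mem_image_of_mem q hz)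
    have hre_lim : Tendsto (fun r : ℝ => (q (r * τ)).re / (1 - r)) (𝓝[<] 1) (𝓝 0) := by
      have h := (continuous_re.tendsto 0).comp hlim
      refine (zero_re ▸ h).congr fun r => ?_
      simp only [Function.comp_apply, ← ofReal_one, ← ofReal_sub, div_ofReal_re]
    have h₀ := hpos 0 (mem_ball_self one_pos)
    have : (q 0).re / 2 ≤ 0 := by
      refine ge_of_tendsto hre_lim ?_
      filter_upwards [Ioo_mem_nhdsLT one_pos] with r hr
      have hz := ofReal_mul_mem_ball hτ hr
      have h := harnack_re_lower_bound hq hpos hz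
      rw [norm_ofReal_mul_of_norm_eq_one hτ, abs_of_pos hr.1] at h
      rw [div_le_div_iff₀ two_pos (sub_pos.mpr hr.2)]
      nlinarith [hpos _ hz]
    linarith

-- The difference quotient of `a - conj a * z ^ 2 + z * w` at `z = rτ`, solved for `(w - c)/(1 - r)`
-- with `c = conj a * τ - a * conj τ = 2i Im(conj a * τ)`.
lemma div_ofReal_mul_sub_eq {a τ w : ℂ} (hτ : ‖τ‖ = 1) {r : ℝ} (hr₀ : r ≠ 0) (hr₁ : r ≠ 1) :
    ((conj a * τ - a * conj τ) - conj a * τ * (1 + r)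
        - (a - conj a * (r * τ) ^ 2 + r * τ * w) / (r * τ - τ)) / r
      = (w - (conj a * τ - a * conj τ)) / (1 - r) := by
  have hτ_conj : τ * conj τ = 1 := by
    rw [mul_conj, normSq_eq_norm_sq, hτ]; norm_num
  have hτ₀ : τ ≠ 0 := norm_ne_zero_iff.mp (by rw [hτ]; exact one_ne_zero)
  have hr₀' : (r : ℂ) ≠ 0 := by exact_mod_cast hr₀
  have hr₁' : (1 : ℂ) - r ≠ 0 := sub_ne_zero.mpr (by exact_mod_cast hr₁.symm)
  rw [show (r : ℂ) * τ - τ = -((1 - r) * τ) by ring]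
  field_simp
  linear_combination (-a) * hτ_conj

theorem generator_extremal_derivative_is_automorphism_generator
    (f p : ℂ → ℂ) (a τ : ℂ) (hτ : ‖τ‖ = 1)
    (hp : DifferentiableOn ℂ p (ball (0:ℂ) 1))
    (hre : ∀ z ∈ ball (0:ℂ) 1, 0 ≤ (p z).re)
    (hf : ∀ z ∈ ball (0:ℂ) 1, f z = a - (starRingEnd ℂ) a * z ^ 2 + z * p z)
    (hderiv : AngularTendsto (fun z => f z / (z - τ)) τ
      ((-2 * ((starRingEnd ℂ) a * τ).re : ℝ) : ℂ)) :
    (∀ z ∈ ball (0:ℂ) 1, p z = (2 * ((starRingEnd ℂ) a * τ).im : ℝ) * Complex.I) ∧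
      (∀ z ∈ ball (0:ℂ) 1,
        f z = a + (2 * ((starRingEnd ℂ) a * τ).im : ℝ) * Complex.I * z
          - (starRingEnd ℂ) a * z ^ 2) := by
  set b := conj a * τ
  set c : ℂ := ((2 * b.im : ℝ) : ℂ) * I
  have hc : c = b - a * conj τ := Complex.ext (by simp [c, b]) (by simp [c, b]; ring)
  have hlim : Tendsto (fun r : ℝ => (p (r * τ) - c) / (1 - r)) (𝓝[<] 1) (𝓝 0) := by
    have h := ((tendsto_const_nhds (x := c)).sub ((tendsto_const_nhds (x := b)).mul
      ((tendsto_const_nhds (x := (1 : ℂ))).add tendsto_ofReal_nhdsLT_one))).sub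
      (hderiv.tendsto_radial hτ) |>.div tendsto_ofReal_nhdsLT_one one_ne_zero
    rw [show (c - b * (1 + 1) - ((-2 * b.re : ℝ) : ℂ)) / 1 = 0 from
      Complex.ext (by simp [c]; ring) (by simp [c]; ring)] at h
    refine h.congr' ?_
    filter_upwards [Ioo_mem_nhdsLT one_pos] with r hr
    rw [Pi.div_apply, hf _ (ofReal_mul_mem_ball hτ hr), hc]
    exact div_ofReal_mul_sub_eq hτ hr.1.ne' hr.2.ne
  have hp_eq : ∀ z ∈ ball (0 : ℂ) 1, p z = c := fun z hz =>
    sub_eq_zero.mp (eq_zero_of_re_nonneg_of_tendsto_div_one_sub hτ (hp.sub_const c)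
      (fun z hz => by simpa [c] using hre z hz) hlim z hz)
  refine ⟨hp_eq, fun z hz => ?_⟩
  rw [hf z hz, hp_eq z hz]
  ring
end

section
/- Let f, g generate commuting one-parameter continuous semigroups {F_t} and {G_s} of holomorphic self-maps of the unit disk Δ (F_t∘G_s = G_s∘F_t for all s,t ≥ 0), and suppose f has a zero at τ ∈ Δ (interior point). Then G_s(τ) = τ for all s ≥ 0, and hence g(τ) = 0. -/
open Complex Metric Filter Set Asymptotics Topology

/-- `F` is a one-parameter continuous semigroup of holomorphic self-maps of the
open unit disk generated by `f` (via the Cauchy problem `∂F_t/∂t + f∘F_t = 0`). -/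
def IsSemigroupGeneratedBy (F : ℝ → ℂ → ℂ) (f : ℂ → ℂ) : Prop :=
  (∀ z ∈ ball (0:ℂ) 1, F 0 z = z) ∧
  (∀ t : ℝ, 0 ≤ t → MapsTo (F t) (ball (0:ℂ) 1) (ball (0:ℂ) 1)) ∧
  (∀ t : ℝ, 0 ≤ t → DifferentiableOn ℂ (F t) (ball (0:ℂ) 1)) ∧
  (∀ t s : ℝ, 0 ≤ t → 0 ≤ s → ∀ z ∈ ball (0:ℂ) 1, F (t + s) z = F t (F s z)) ∧
  (∀ z ∈ ball (0:ℂ) 1, ∀ t : ℝ, 0 ≤ t → HasDerivAt (fun s => F s z) (-(f (F t z))) t)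

/-!
The `F`-trajectory of `τ` solves `γ' = -f ∘ γ` with `γ 0 = τ`, and `f` is locally Lipschitz with
`f τ = 0`, so by uniqueness for this ODE `F_t τ = τ` for all `t`. Commutation then gives
`F_t (G_s τ) = G_s τ`, and differentiating in `t` shows `f (G_s τ) = 0`. The orbit `s ↦ G_s τ` is
thus a continuous path in the zero set of `f`, which is discrete since `f ≢ 0`; hence it is
constant, and `g τ = 0` follows by differentiating `s ↦ G_s τ` once more.
-/

theorem ODE_solution_eqOn_const_of_eq_zero {E : Type*} [NormedAddCommGroup E]
    [NormedSpace ℝ E] {v : E → E} {U : Set E} {γ : ℝ → E} {x₀ : E}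
    (hv : LocallyLipschitzOn U v) (hγU : MapsTo γ (Ici 0) U)
    (hγ : ∀ t ≥ 0, HasDerivAt γ (v (γ t)) t) (hγ₀ : γ 0 = x₀) (hvx₀ : v x₀ = 0) :
    EqOn γ (fun _ ↦ x₀) (Ici 0) := by
  intro T hT
  have hcont : ContinuousOn γ (Icc 0 T) := fun t ht ↦
    (hγ t ht.1).continuousAt.continuousWithinAt
  -- On the compact piece `γ '' [0, T]` of `U` the field is globally Lipschitz.
  obtain ⟨K, hK⟩ := LocallyLipschitzOn.exists_lipschitzOnWith_of_compact
    (isCompact_Icc.image_of_continuousOn hcont) (hv.mono (image_subset_iff.2 fun t ht ↦ hγU ht.1))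
  exact ODE_solution_unique_of_mem_Icc_right (v := fun _ ↦ v) (fun _ _ ↦ hK) hcont
    (fun t ht ↦ (hγ t ht.1).hasDerivWithinAt)
    (fun t ht ↦ mem_image_of_mem γ (Ico_subset_Icc_self ht))
    continuousOn_const (fun t _ ↦ by simpa [hvx₀] using hasDerivWithinAt_const t (Ici t) x₀)
    (fun _ _ ↦ hγ₀ ▸ mem_image_of_mem γ (left_mem_Icc.2 hT)) hγ₀ ⟨hT, le_rfl⟩

theorem AnalyticOnNhd.isDiscrete_preimage_zero_inter {𝕜 E : Type*} [NontriviallyNormedField 𝕜]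
    [NormedAddCommGroup E] [NormedSpace 𝕜 E] {f : 𝕜 → E} {U : Set 𝕜}
    (hf : AnalyticOnNhd 𝕜 f U) (hU : IsPreconnected U) (hne : ∃ z ∈ U, f z ≠ 0) :
    IsDiscrete (f ⁻¹' {0} ∩ U) := by
  obtain ⟨z, hz, hfz⟩ := hne
  exact isDiscrete_of_codiscreteWithin <|
    (hf.eqOn_zero_or_eventually_ne_zero_of_preconnected hU).resolve_left fun h ↦ hfz (h hz)

namespace IsSemigroupGeneratedBy

variable {F : ℝ → ℂ → ℂ} {f : ℂ → ℂ}

theorem apply_zero (hF : IsSemigroupGeneratedBy F f) {z : ℂ} (hz : z ∈ ball (0 : ℂ) 1) :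
    F 0 z = z :=
  hF.1 z hz

theorem mapsTo (hF : IsSemigroupGeneratedBy F f) {t : ℝ} (ht : 0 ≤ t) :
    MapsTo (F t) (ball (0 : ℂ) 1) (ball (0 : ℂ) 1) :=
  hF.2.1 t ht

theorem hasDerivAt (hF : IsSemigroupGeneratedBy F f) {z : ℂ} (hz : z ∈ ball (0 : ℂ) 1) {t : ℝ}
    (ht : 0 ≤ t) : HasDerivAt (fun s ↦ F s z) (-f (F t z)) t :=
  hF.2.2.2.2 z hz t ht

theorem continuousOn_orbit (hF : IsSemigroupGeneratedBy F f) {z : ℂ} (hz : z ∈ ball (0 : ℂ) 1) :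
    ContinuousOn (fun t ↦ F t z) (Ici 0) :=
  fun _ ht ↦ (hF.hasDerivAt hz ht).continuousAt.continuousWithinAt

theorem apply_eq_zero_of_forall_apply_eq (hF : IsSemigroupGeneratedBy F f) {w : ℂ}
    (hw : w ∈ ball (0 : ℂ) 1) (hfix : ∀ t ≥ 0, F t w = w) : f w = 0 := by
  have hconst : (fun t ↦ F t w) =ᶠ[𝓝 1] fun _ ↦ w :=
    eventually_of_mem (Ioi_mem_nhds one_pos) fun t ht ↦ hfix t ht.le
  have hderiv := (hF.hasDerivAt hw zero_le_one).congr_of_eventuallyEq hconst.symm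
  simpa [hfix 1 zero_le_one] using hderiv.unique (hasDerivAt_const 1 w)

theorem forall_apply_eq_of_apply_eq_zero (hF : IsSemigroupGeneratedBy F f)
    (hf : DifferentiableOn ℂ f (ball (0 : ℂ) 1)) {τ : ℂ} (hτ : τ ∈ ball (0 : ℂ) 1)
    (hfτ : f τ = 0) : ∀ t ≥ 0, F t τ = τ := by
  have hlip : LocallyLipschitzOn (ball (0 : ℂ) 1) fun z ↦ -f z :=
    ((hf.contDiffOn isOpen_ball).neg.restrict_scalars ℝ).locallyLipschitzOn (convex_ball 0 1)
  exact ODE_solution_eqOn_const_of_eq_zero hlip (fun _ ht ↦ hF.mapsTo ht hτ)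
    (fun _ ht ↦ hF.hasDerivAt hτ ht) (hF.apply_zero hτ) (by simp [hfτ])

end IsSemigroupGeneratedBy

theorem commuting_semigroups_share_interior_null_point_general
    (f g : ℂ → ℂ) (F G : ℝ → ℂ → ℂ) (τ : ℂ)
    (hf : DifferentiableOn ℂ f (ball (0:ℂ) 1))
    (hF : IsSemigroupGeneratedBy F f)
    (hG : IsSemigroupGeneratedBy G g)
    (hcomm : ∀ t s : ℝ, 0 ≤ t → 0 ≤ s → ∀ z ∈ ball (0:ℂ) 1, F t (G s z) = G s (F t z))
    (hτ : τ ∈ ball (0:ℂ) 1) (hfτ : f τ = 0)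
    (hfne : ∃ z ∈ ball (0:ℂ) 1, f z ≠ 0) :
    (∀ s : ℝ, 0 ≤ s → G s τ = τ) ∧ g τ = 0 := by
  have hFτ := hF.forall_apply_eq_of_apply_eq_zero hf hτ hfτ
  have horbit : MapsTo (fun s ↦ G s τ) (Ici 0) (f ⁻¹' {0} ∩ ball 0 1) := fun s hs ↦
    have hGs := hG.mapsTo hs hτ
    ⟨hF.apply_eq_zero_of_forall_apply_eq hGs fun t ht ↦ by rw [hcomm t s ht hs τ hτ, hFτ t ht],
      hGs⟩
  have hzeros : IsDiscrete (f ⁻¹' {0} ∩ ball 0 1) :=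
    (hf.analyticOnNhd isOpen_ball).isDiscrete_preimage_zero_inter
      (convex_ball 0 1).isPreconnected hfne
  have hGτ : ∀ s ≥ 0, G s τ = τ := fun s hs ↦
    ((convex_Ici 0).isPreconnected.constant_of_mapsTo hzeros (hG.continuousOn_orbit hτ) horbit
      hs self_mem_Ici).trans (hG.apply_zero hτ)
  exact ⟨hGτ, hG.apply_eq_zero_of_forall_apply_eq hτ hGτ⟩

theorem commuting_semigroups_share_interior_null_point
    (f g : ℂ → ℂ) (F G : ℝ → ℂ → ℂ) (τ : ℂ)
    (hf : DifferentiableOn ℂ f (ball (0:ℂ) 1))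
    (hg : DifferentiableOn ℂ g (ball (0:ℂ) 1))
    (hF : IsSemigroupGeneratedBy F f)
    (hG : IsSemigroupGeneratedBy G g)
    (hcomm : ∀ t s : ℝ, 0 ≤ t → 0 ≤ s → ∀ z ∈ ball (0:ℂ) 1, F t (G s z) = G s (F t z))
    (hτ : τ ∈ ball (0:ℂ) 1) (hfτ : f τ = 0)
    (hfne : ∃ z ∈ ball (0:ℂ) 1, f z ≠ 0) :
    (∀ s : ℝ, 0 ≤ s → G s τ = τ) ∧ g τ = 0 :=
  commuting_semigroups_share_interior_null_point_general f g F G τ hf hF hG hcomm hτ hfτ hfne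
end
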